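/- Let 0 < r < 1 and let (T₁,…,T_d) be a tuple of invertible bounded operators on a complex Hilbert space H. Then (T₁,…,T_d) is a doubly commuting tuple of operators in QA_r if and only if there exist a tuple (U₁,…,U_d) of commuting unitary operators on H and a tuple (D₁,…,D_d) of commuting self-adjoint invertible operators on H with spectrum σ(D_j) ⊆ { z ∈ ℂ : r ≤ |z| ≤ r⁻¹ } for each j, such that D_iU_j = U_jD_i for all i ≠ j and T_j = U_jD_j for each j = 1,…,d. -/

import Mathlib

open ContinuousLinearMap

variable {H : Type*} [NormedAddCommGroup H] [InnerProductSpace ℂ H] [CompleteSpace H]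

/-- `T ∈ C_{1,r}`: `T` is invertible, `‖T‖ ≤ 1` and `‖r • T⁻¹‖ ≤ 1`. -/
def MemC1r (r : ℝ) (T : H →L[ℂ] H) : Prop :=
  IsUnit T ∧ ‖T‖ ≤ 1 ∧ ‖(r : ℂ) • Ring.inverse T‖ ≤ 1

/-- `T ∈ QA_r`: `T` is invertible, `‖r • T‖ ≤ 1` and `‖r • T⁻¹‖ ≤ 1`. -/
def MemQA (r : ℝ) (T : H →L[ℂ] H) : Prop :=
  IsUnit T ∧ ‖(r : ℂ) • T‖ ≤ 1 ∧ ‖(r : ℂ) • Ring.inverse T‖ ≤ 1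

/-- A tuple of operators is doubly commuting if `TᵢTⱼ = TⱼTᵢ` and `TᵢTⱼ* = Tⱼ*Tᵢ` for `i ≠ j`. -/
def DoublyCommuting {d : ℕ} (T : Fin d → H →L[ℂ] H) : Prop :=
  ∀ i j, i ≠ j → T i * T j = T j * T i ∧ T i * adjoint (T j) = adjoint (T j) * T i

/-
Polar decomposition: an invertible `T` factors as `T = U |T|` with `|T| = (T*T)^{1/2}` invertible
and `U = T |T|⁻¹` unitary. Multiplying by a unitary preserves norms, so `T ∈ QA_r` says exactly
`‖|T|‖ ≤ r⁻¹` and `‖|T|⁻¹‖ ≤ r⁻¹`; since the norm of a self-adjoint element is its spectral radius,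
this is `σ(|T|) ⊆ Ā_r`. If `Tⱼ` and `Tⱼ*` commute with `Tᵢ`, they commute with every continuous
function of `Tᵢ*Tᵢ`, hence with `|Tᵢ|` and `Uᵢ`, which gives all the commutation relations of the
factors. Conversely, if the factors commute as stated, `Tᵢ` commutes with `Tⱼ` and `Tⱼ* = |Tⱼ| Uⱼ*`.
-/

lemma Commute.ringInverse_right {M₀ : Type*} [MonoidWithZero M₀] {a b : M₀} (h : Commute a b) :
    Commute a (Ring.inverse b) := by
  by_cases hb : IsUnit b
  · obtain ⟨u, rfl⟩ := hb
    rw [Ring.inverse_unit]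
    exact h.units_inv_right
  · rw [Ring.inverse_non_unit _ hb]
    exact Commute.zero_right a

lemma Commute.star_right_of_mem_unitary {R : Type*} [Monoid R] [StarMul R] {a u : R}
    (hu : u ∈ unitary R) (h : Commute a u) : Commute a (star u) :=
  h.units_inv_right (u := Unitary.toUnits ⟨u, hu⟩)

lemma isUnit_unitary_mul_iff {R : Type*} [Monoid R] [StarMul R] {u : R} (hu : u ∈ unitary R)
    (b : R) : IsUnit (u * b) ↔ IsUnit b :=
  Units.isUnit_units_mul (Unitary.toUnits ⟨u, hu⟩) b

lemma Ring.inverse_unitary_mul {R : Type*} [MonoidWithZero R] [StarMul R] {u : R}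
    (hu : u ∈ unitary R) (b : R) : Ring.inverse (u * b) = Ring.inverse b * star u := by
  by_cases hb : IsUnit b
  · obtain ⟨w, rfl⟩ := hb
    rw [show u * w = ↑(Unitary.toUnits ⟨u, hu⟩ * w) from rfl, Ring.inverse_unit, Ring.inverse_unit,
      mul_inv_rev]
    rfl
  · have hub : ¬IsUnit (u * b) := (isUnit_unitary_mul_iff hu b).not.mpr hb
    rw [Ring.inverse_non_unit _ hb, Ring.inverse_non_unit _ hub, zero_mul]

lemma spectrum.inv_mem_ringInverse {𝕜 A : Type*} [Field 𝕜] [Ring A] [Algebra 𝕜 A] {a : A}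
    (ha : IsUnit a) {z : 𝕜} (hz : z ∈ spectrum 𝕜 a) : z⁻¹ ∈ spectrum 𝕜 (Ring.inverse a) := by
  obtain ⟨u, rfl⟩ := ha
  rw [Ring.inverse_unit]
  simpa using (spectrum.inv_mem_iff (r := Units.mk0 z (spectrum.ne_zero_of_mem_of_unit hz))).mp hz

lemma commute_mul_and_star_of_commute_factors {R : Type*} [Monoid R] [StarMul R] {u c v e : R}
    (hv : v ∈ unitary R) (he : IsSelfAdjoint e) (huv : Commute u v) (hue : Commute u e)
    (hcv : Commute c v) (hce : Commute c e) :
    Commute (u * c) (v * e) ∧ Commute (u * c) (star (v * e)) := by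
  have hv' : Commute (u * c) v := huv.mul_left hcv
  have he' : Commute (u * c) e := hue.mul_left hce
  refine ⟨hv'.mul_right he', ?_⟩
  rw [star_mul, he.star_eq]
  exact he'.mul_right (hv'.star_right_of_mem_unitary hv)

section CStarAlgebra

variable {A : Type*} [CStarAlgebra A]

lemma IsSelfAdjoint.norm_le_of_forall_mem_spectrum {a : A} (ha : IsSelfAdjoint a) {M : ℝ}
    (hM : 0 ≤ M) (h : ∀ z ∈ spectrum ℂ a, ‖z‖ ≤ M) : ‖a‖ ≤ M := by
  rw [← ha.toReal_spectralRadius_complex_eq_norm]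
  refine ENNReal.toReal_le_of_le_ofReal hM (iSup₂_le fun z hz => ?_)
  rw [← enorm_eq_nnnorm, ← ofReal_norm]
  exact ENNReal.ofReal_le_ofReal (h z hz)

lemma IsSelfAdjoint.spectrum_subset_annulus_iff {r : ℝ} (hr : 0 < r) {a : A}
    (ha : IsSelfAdjoint a) (hu : IsUnit a) :
    spectrum ℂ a ⊆ {z : ℂ | r ≤ ‖z‖ ∧ ‖z‖ ≤ r⁻¹} ↔ ‖a‖ ≤ r⁻¹ ∧ ‖Ring.inverse a‖ ≤ r⁻¹ := by
  -- `spectrum.norm_le_norm_of_mem` needs `‖1‖ = 1`, which fails only in the zero algebra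
  cases subsingleton_or_nontrivial A
  · simp [spectrum.of_subsingleton, Subsingleton.elim a 0, hr.le]
  constructor
  · intro h
    refine ⟨ha.norm_le_of_forall_mem_spectrum (by positivity) fun z hz => (h hz).2,
      ha.ringInverse.norm_le_of_forall_mem_spectrum (by positivity) fun w hw => ?_⟩
    have hu' : IsUnit (Ring.inverse a) := isUnit_ringInverse.mpr hu
    have hw0 : w ≠ 0 := fun h0 => spectrum.zero_notMem ℂ hu' (h0 ▸ hw)
    have hwinv : w⁻¹ ∈ spectrum ℂ a :=
      Ring.inverse_inverse hu ▸ spectrum.inv_mem_ringInverse hu' hw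
    have hr_le : r ≤ ‖w‖⁻¹ := norm_inv w ▸ (h hwinv).1
    exact (le_inv_comm₀ hr (norm_pos_iff.mpr hw0)).mp hr_le
  · rintro ⟨h, h'⟩ z hz
    have hz0 : z ≠ 0 := fun h0 => spectrum.zero_notMem ℂ hu (h0 ▸ hz)
    have hz_inv : ‖z‖⁻¹ ≤ r⁻¹ :=
      norm_inv z ▸ (spectrum.norm_le_norm_of_mem (spectrum.inv_mem_ringInverse hu hz)).trans h'
    exact ⟨(inv_le_inv₀ (norm_pos_iff.mpr hz0) hr).mp hz_inv,
      (spectrum.norm_le_norm_of_mem hz).trans h⟩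

variable [PartialOrder A] [StarOrderedRing A]

noncomputable def polarUnitary (a : A) : A := a * Ring.inverse (CFC.abs a)

lemma IsUnit.cfcAbs {a : A} (ha : IsUnit a) : IsUnit (CFC.abs a) :=
  (CFC.isUnit_sqrt_iff _).mpr (ha.star.mul ha)

lemma polarUnitary_mul_cfcAbs {a : A} (ha : IsUnit a) : polarUnitary a * CFC.abs a = a :=
  Ring.inverse_mul_cancel_right _ _ ha.cfcAbs

lemma polarUnitary_mem_unitary {a : A} (ha : IsUnit a) : polarUnitary a ∈ unitary A := by
  have hd := ha.cfcAbs
  refine (ha.mul (isUnit_ringInverse.mpr hd)).mem_unitary_of_star_mul_self ?_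
  have hsa : star (Ring.inverse (CFC.abs a)) = Ring.inverse (CFC.abs a) :=
    (CFC.abs_nonneg a).isSelfAdjoint.ringInverse.star_eq
  calc star (polarUnitary a) * polarUnitary a
      = Ring.inverse (CFC.abs a) * (star a * a) * Ring.inverse (CFC.abs a) := by
        simp only [polarUnitary, star_mul, hsa, mul_assoc]
    _ = 1 := by
        rw [← CFC.abs_mul_abs, ← mul_assoc, Ring.inverse_mul_cancel _ hd, one_mul,
          Ring.mul_inverse_cancel _ hd]

lemma Commute.polarUnitary_right {a b : A} (h₁ : Commute a b) (h₂ : Commute a (star b)) :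
    Commute b (polarUnitary a) :=
  h₁.symm.mul_right (h₁.cfcAbs_right h₂).ringInverse_right

lemma Commute.polarUnitary_polarUnitary {a b : A} (h₁ : Commute a b) (h₂ : Commute a (star b)) :
    Commute (polarUnitary a) (polarUnitary b) := by
  have h₃ : Commute (star b) (polarUnitary a) := h₂.polarUnitary_right (by rwa [_root_.star_star])
  refine (h₁.polarUnitary_right h₂).polarUnitary_right ?_
  simpa using h₃.star_star

lemma Commute.cfcAbs_polarUnitary {a b : A} (h₁ : Commute a b) (h₂ : Commute a (star b)) :
    Commute (CFC.abs a) (polarUnitary b) := by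
  have h₃ : Commute b (CFC.abs a) := h₁.cfcAbs_right h₂
  exact h₃.polarUnitary_right (by rwa [(CFC.abs_nonneg a).star_eq])

end CStarAlgebra

lemma memQA_iff {r : ℝ} (hr : 0 < r) {T : H →L[ℂ] H} :
    MemQA r T ↔ IsUnit T ∧ ‖T‖ ≤ r⁻¹ ∧ ‖Ring.inverse T‖ ≤ r⁻¹ := by
  simp only [MemQA, norm_smul, Complex.norm_real, Real.norm_of_nonneg hr.le, ← le_inv_mul_iff₀ hr,
    mul_one]

lemma memQA_unitary_mul_iff {r : ℝ} (hr : 0 < r) {U D : H →L[ℂ] H} (hU : U ∈ unitary (H →L[ℂ] H))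
    (hD : IsSelfAdjoint D) :
    MemQA r (U * D) ↔ IsUnit D ∧ spectrum ℂ D ⊆ {z : ℂ | r ≤ ‖z‖ ∧ ‖z‖ ≤ r⁻¹} := by
  rw [memQA_iff hr, Ring.inverse_unitary_mul hU, CStarRing.norm_mem_unitary_mul _ hU,
    CStarRing.norm_mul_mem_unitary _ (Unitary.star_mem hU), isUnit_unitary_mul_iff hU]
  exact and_congr_right fun hDu => (hD.spectrum_subset_annulus_iff hr hDu).symm

lemma doublyCommuting_iff {d : ℕ} {T : Fin d → H →L[ℂ] H} :
    DoublyCommuting T ↔ ∀ i j, i ≠ j → Commute (T i) (T j) ∧ Commute (T i) (star (T j)) := by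
  simp only [DoublyCommuting, star_eq_adjoint]
  rfl

theorem stmt18_general (r : ℝ) (hr0 : 0 < r) (d : ℕ) (T : Fin d → H →L[ℂ] H) :
    (DoublyCommuting T ∧ ∀ i, MemQA r (T i)) ↔
      ∃ U D : Fin d → H →L[ℂ] H,
        (∀ i, U i ∈ unitary (H →L[ℂ] H)) ∧
        (∀ i j, U i * U j = U j * U i) ∧
        (∀ i, IsSelfAdjoint (D i)) ∧ (∀ i, IsUnit (D i)) ∧
        (∀ i j, D i * D j = D j * D i) ∧
        (∀ j, spectrum ℂ (D j) ⊆ {z : ℂ | r ≤ ‖z‖ ∧ ‖z‖ ≤ r⁻¹}) ∧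
        (∀ i j, i ≠ j → D i * U j = U j * D i) ∧
        (∀ j, T j = U j * D j) := by
  rw [doublyCommuting_iff]
  constructor
  · rintro ⟨hT, hQA⟩
    have hTu (j : Fin d) : IsUnit (T j) := (hQA j).1
    have hpolar (j : Fin d) : T j = polarUnitary (T j) * CFC.abs (T j) :=
      (polarUnitary_mul_cfcAbs (hTu j)).symm
    have hU (j : Fin d) : polarUnitary (T j) ∈ unitary (H →L[ℂ] H) :=
      polarUnitary_mem_unitary (hTu j)
    have hDsa (j : Fin d) : IsSelfAdjoint (CFC.abs (T j)) := (CFC.abs_nonneg _).isSelfAdjoint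
    have hD (j : Fin d) : IsUnit (CFC.abs (T j)) ∧
        spectrum ℂ (CFC.abs (T j)) ⊆ {z : ℂ | r ≤ ‖z‖ ∧ ‖z‖ ≤ r⁻¹} :=
      (memQA_unitary_mul_iff hr0 (hU j) (hDsa j)).mp (by rw [← hpolar j]; exact hQA j)
    refine ⟨fun j => polarUnitary (T j), fun j => CFC.abs (T j), hU, fun i j => ?_, hDsa,
      fun j => (hD j).1, fun i j => ?_, fun j => (hD j).2,
      fun i j hij => ((hT i j hij).1.cfcAbs_polarUnitary (hT i j hij).2).eq, hpolar⟩
    · rcases eq_or_ne i j with rfl | hij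
      · rfl
      · exact ((hT i j hij).1.polarUnitary_polarUnitary (hT i j hij).2).eq
    · rcases eq_or_ne i j with rfl | hij
      · rfl
      · exact ((hT i j hij).1.cfcAbs_cfcAbs (hT i j hij).2).eq
  · rintro ⟨U, D, hU, hUU, hD, hDu, hDD, hspec, hDU, hTUD⟩
    obtain rfl : T = fun j => U j * D j := funext hTUD
    exact ⟨fun i j hij => commute_mul_and_star_of_commute_factors (hU j) (hD j) (hUU i j)
        (hDU j i hij.symm).symm (hDU i j hij) (hDD i j),
      fun j => (memQA_unitary_mul_iff hr0 (hU j) (hD j)).mpr ⟨hDu j, hspec j⟩⟩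

theorem stmt18 (r : ℝ) (hr0 : 0 < r) (hr1 : r < 1) (d : ℕ) (T : Fin d → H →L[ℂ] H)
    (hu : ∀ i, IsUnit (T i)) :
    (DoublyCommuting T ∧ ∀ i, MemQA r (T i)) ↔
      ∃ U D : Fin d → H →L[ℂ] H,
        (∀ i, U i ∈ unitary (H →L[ℂ] H)) ∧
        (∀ i j, U i * U j = U j * U i) ∧
        (∀ i, IsSelfAdjoint (D i)) ∧ (∀ i, IsUnit (D i)) ∧
        (∀ i j, D i * D j = D j * D i) ∧
        (∀ j, spectrum ℂ (D j) ⊆ {z : ℂ | r ≤ ‖z‖ ∧ ‖z‖ ≤ r⁻¹}) ∧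
        (∀ i j, i ≠ j → D i * U j = U j * D i) ∧
        (∀ j, T j = U j * D j) :=
  stmt18_general r hr0 d T
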